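/- arXiv:0710.3456 — 4 statements merged into one kernel-verified Lean document; each statement's English description precedes it below -/
import Mathlib

section
/- For all x ∈ ℝ, the function Ψ(x) = 1/(1+x²) − Φ(−|x|) is positive, where Φ is the standard normal cumulative distribution function. -/
open Real MeasureTheory

noncomputable def stdNormalCDF (x : ℝ) : ℝ :=
  ∫ t in Set.Iic x, Real.exp (-t ^ 2 / 2) / Real.sqrt (2 * Real.pi)

/-!
Write `a = |x|`. Shifting the Gaussian tail `∫_a^∞ e^{-t²/2} dt` to `∫_0^∞ e^{-(s+a)²/2} ds`
and using `(s + a)² ≥ s² + a²` gives the bound `Φ(-a) ≤ e^{-a²/2} / 2`. This is smaller than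
`1 / (1 + a²)` because `2 e^{a²/2} ≥ 2 + a² > 1 + a²`.
-/

open Set

theorem integral_Ioi_comp_add_right {E : Type*} [NormedAddCommGroup E] [NormedSpace ℝ E]
    (g : ℝ → E) (a : ℝ) :
    ∫ s in Ioi 0, g (s + a) = ∫ t in Ioi a, g t := by
  have h := (measurePreserving_add_right volume a).setIntegral_preimage_emb
    (measurableEmbedding_addRight a) g (Ioi a)
  rwa [preimage_add_const_Ioi, sub_self] at h

theorem integral_Ioi_exp_neg_mul_sq_le {a b : ℝ} (ha : 0 ≤ a) (hb : 0 < b) :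
    ∫ t in Ioi a, exp (-b * t ^ 2) ≤ exp (-b * a ^ 2) * (√(π / b) / 2) := by
  have hint := integrable_exp_neg_mul_sq hb
  have hshift : ∫ t in Ioi a, exp (-b * a ^ 2) * exp (-b * (t - a) ^ 2)
      = exp (-b * a ^ 2) * (√(π / b) / 2) := by
    rw [← integral_Ioi_comp_add_right, integral_const_mul, ← integral_gaussian_Ioi]
    simp only [add_sub_cancel_right]
  rw [← hshift]
  refine setIntegral_mono_on hint.integrableOn
    ((hint.comp_sub_right a).const_mul _).integrableOn measurableSet_Ioi fun t ht => ?_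
  rw [← exp_add, exp_le_exp]
  have hta : a < t := ht
  nlinarith [mul_nonneg ha (sub_nonneg.mpr hta.le)]

theorem stdNormalCDF_neg_le {a : ℝ} (ha : 0 ≤ a) : stdNormalCDF (-a) ≤ exp (-a ^ 2 / 2) / 2 := by
  have hs : 0 < √(2 * π) := sqrt_pos.mpr (by positivity)
  have htail : stdNormalCDF (-a) = (∫ t in Ioi a, exp (-(1 / 2) * t ^ 2)) / √(2 * π) := by
    rw [stdNormalCDF, integral_div, ← integral_comp_neg_Ioi]
    congr 1; congr 1 with t; ring_nf
  have hπ : π / (1 / 2) = 2 * π := by ring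
  rw [htail, div_le_iff₀ hs]
  calc ∫ t in Ioi a, exp (-(1 / 2) * t ^ 2)
      ≤ exp (-(1 / 2) * a ^ 2) * (√(π / (1 / 2)) / 2) :=
        integral_Ioi_exp_neg_mul_sq_le ha one_half_pos
    _ = exp (-a ^ 2 / 2) / 2 * √(2 * π) := by rw [hπ]; ring_nf

theorem exp_neg_sq_div_two_div_two_lt (a : ℝ) : exp (-a ^ 2 / 2) / 2 < 1 / (1 + a ^ 2) := by
  have h := add_one_le_exp (a ^ 2 / 2)
  rw [div_lt_div_iff₀ two_pos (by positivity), neg_div, exp_neg, one_mul,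
    inv_mul_lt_iff₀ (exp_pos _)]
  linarith

theorem Psi_pos (x : ℝ) :
    0 < 1 / (1 + x ^ 2) - stdNormalCDF (-|x|) := by
  have h := stdNormalCDF_neg_le (abs_nonneg x)
  rw [sq_abs] at h
  linarith [exp_neg_sq_div_two_div_two_lt x]
end

section
/- The equation x·e^{x²/2}/(1+x²)² = 1/√(8π) has a unique solution x_Φ in (0, ∞), and 0.213 < x_Φ < 0.214. -/
/-! The derivative of `u` factors as `u' x = exp (x²/2) (1 - x²)² / (1 + x²)³`, which is positive on
`[0, ∞)` except at `x = 1`, so `u` is strictly increasing there and the equation has at most one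
positive root. The root is bracketed by evaluating `u` at `0.213` and `0.214`, using
`1 + t ≤ exp t ≤ 1 / (1 - t)` and `3.141592 < π < 3.141593`; the intermediate value theorem does
the rest. -/

open Real Set

noncomputable def u (x : ℝ) : ℝ := x * exp (x ^ 2 / 2) / (1 + x ^ 2) ^ 2

theorem hasDerivAt_u (x : ℝ) :
    HasDerivAt u (exp (x ^ 2 / 2) * (1 - x ^ 2) ^ 2 / (1 + x ^ 2) ^ 3) x := by
  have hsq : HasDerivAt (fun y : ℝ => y ^ 2 / 2) x x := by
    simpa using (hasDerivAt_pow 2 x).div_const 2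
  have hden : HasDerivAt (fun y : ℝ => (1 + y ^ 2) ^ 2) (2 * (1 + x ^ 2) * (2 * x)) x := by
    simpa using ((hasDerivAt_pow 2 x).const_add 1).fun_pow 2
  have hpos : (1 + x ^ 2) ^ 2 ≠ 0 := by positivity
  refine (((hasDerivAt_id' x).fun_mul hsq.exp).div hden hpos).congr_deriv ?_
  field_simp
  ring

theorem continuous_u : Continuous u :=
  Continuous.div (by fun_prop) (by fun_prop) fun x => by positivity

theorem u_strictMonoOn : StrictMonoOn u (Ici 0) := by
  have hderiv_pos {x : ℝ} (hx : 0 < x) (hx1 : x ≠ 1) : 0 < deriv u x := by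
    have : (1 - x ^ 2) ^ 2 ≠ 0 := pow_ne_zero 2 fun h => hx1 (by nlinarith)
    rw [(hasDerivAt_u x).deriv]
    positivity
  rw [← Icc_union_Ici_eq_Ici zero_le_one]
  refine StrictMonoOn.union ?_ ?_ (isGreatest_Icc zero_le_one) isLeast_Ici
  · refine strictMonoOn_of_deriv_pos (convex_Icc 0 1) continuous_u.continuousOn ?_
    rw [interior_Icc]
    exact fun x hx => hderiv_pos hx.1 hx.2.ne
  · refine strictMonoOn_of_deriv_pos (convex_Ici 1) continuous_u.continuousOn ?_
    rw [interior_Ici]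
    exact fun x hx => hderiv_pos (zero_lt_one.trans hx) (ne_of_gt hx)

theorem sqrt_eight_pi_mem_Ioo : sqrt (8 * π) ∈ Ioo 5.013256 5.01326 := by
  have hsq : sqrt (8 * π) ^ 2 = 8 * π := sq_sqrt (by positivity)
  have hnonneg : 0 ≤ sqrt (8 * π) := sqrt_nonneg _
  have := pi_gt_d6
  have := pi_lt_d6
  constructor <;> nlinarith

theorem u_0213_lt_inv_sqrt_eight_pi : u 0.213 < 1 / sqrt (8 * π) := by
  have hexp : exp (0.213 ^ 2 / 2) ≤ 1 / (1 - 0.213 ^ 2 / 2) :=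
    exp_bound_div_one_sub_of_interval (by norm_num) (by norm_num)
  have hs := sqrt_eight_pi_mem_Ioo.2
  rw [u, div_lt_div_iff₀ (by positivity) (sqrt_pos.2 (by positivity))]
  generalize sqrt (8 * π) = s at *
  norm_num at hexp ⊢
  nlinarith [exp_pos (0.213 ^ 2 / 2 : ℝ)]

theorem inv_sqrt_eight_pi_lt_u_0214 : 1 / sqrt (8 * π) < u 0.214 := by
  have hexp : (0.214 : ℝ) ^ 2 / 2 + 1 ≤ exp (0.214 ^ 2 / 2) := add_one_le_exp _
  have hs := sqrt_eight_pi_mem_Ioo.1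
  rw [u, div_lt_div_iff₀ (sqrt_pos.2 (by positivity)) (by positivity)]
  generalize sqrt (8 * π) = s at *
  norm_num at hexp ⊢
  nlinarith

theorem u_eq_root_unique :
    ∃ xΦ : ℝ, 0 < xΦ ∧
      xΦ * Real.exp (xΦ ^ 2 / 2) / (1 + xΦ ^ 2) ^ 2 = 1 / Real.sqrt (8 * Real.pi) ∧
      0.213 < xΦ ∧ xΦ < 0.214 ∧
      ∀ y : ℝ, 0 < y →
        y * Real.exp (y ^ 2 / 2) / (1 + y ^ 2) ^ 2 = 1 / Real.sqrt (8 * Real.pi) → y = xΦ := by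
  obtain ⟨x, ⟨hx_gt, hx_lt⟩, hx⟩ :=
    intermediate_value_Ioo (by norm_num) continuous_u.continuousOn
      ⟨u_0213_lt_inv_sqrt_eight_pi, inv_sqrt_eight_pi_lt_u_0214⟩
  have hx_pos : 0 < x := by linarith
  exact ⟨x, hx_pos, hx, hx_gt, hx_lt, fun y hy hyx =>
    u_strictMonoOn.injOn hy.le hx_pos.le (hyx.trans hx.symm)⟩
end

section
/- Let x_Φ be the unique positive root of x·e^{x²/2}/(1+x²)² = 1/√(8π). Then the even function Ψ(x) = 1/(1+x²) − Φ(−|x|) attains its maximum over ℝ exactly at the two points x_Φ and −x_Φ. -/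
open Real MeasureTheory

noncomputable def Psi (x : ℝ) : ℝ := 1 / (1 + x ^ 2) - stdNormalCDF (-|x|)

/-!
On `[0, ∞)` we have `Ψ' = φ(x) - 2x/(1+x²)² = 2 e^{-x²/2} (1/√(8π) - h x)` with
`h x = x e^{x²/2}/(1+x²)²` (`criticalRatio`). Since `h 0 = 0` and `h → ∞`, the intermediate
value theorem and the uniqueness of the positive solution `x_Φ` of `h = 1/√(8π)` force
`h < 1/√(8π)` on `(0, x_Φ)` and `h > 1/√(8π)` on `(x_Φ, ∞)`. So `Ψ` increases strictly up to
`x_Φ` and decreases strictly after it; evenness gives the point `-x_Φ`.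
-/

open Filter Set

theorem IsPreconnected.lt_of_lt_of_notMem_image {α δ : Type*} [TopologicalSpace α] [LinearOrder δ]
    [TopologicalSpace δ] [OrderClosedTopology δ] {s : Set α} (hs : IsPreconnected s)
    {f : α → δ} (hf : ContinuousOn f s) {c : δ} (hc : c ∉ f '' s) {a b : α} (ha : a ∈ s)
    (hb : b ∈ s) (hfa : f a < c) : f b < c := by
  by_contra! hfb
  exact hc (hs.intermediate_value ha hb hf ⟨hfa.le, hfb⟩)

theorem hasDerivAt_integral_Iic {g : ℝ → ℝ} (hint : Integrable g) (hcont : Continuous g)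
    (x : ℝ) : HasDerivAt (fun u ↦ ∫ t in Iic u, g t) (g x) x := by
  have hsplit : (fun u ↦ ∫ t in Iic u, g t) = fun u ↦ (∫ t in Iic 0, g t) + ∫ t in (0)..u, g t := by
    funext u
    rw [← intervalIntegral.integral_Iic_sub_Iic hint.integrableOn hint.integrableOn]
    ring
  rw [hsplit]
  exact (hcont.integral_hasStrictDerivAt 0 x).hasDerivAt.const_add _

noncomputable def stdNormalPDF (t : ℝ) : ℝ := exp (-t ^ 2 / 2) / √(2 * π)

theorem integrable_stdNormalPDF : Integrable stdNormalPDF := by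
  have hpdf : stdNormalPDF = fun t ↦ exp (-(1 / 2) * t ^ 2) / √(2 * π) := by
    funext t
    rw [stdNormalPDF]
    ring_nf
  rw [hpdf]
  exact (integrable_exp_neg_mul_sq (by norm_num)).div_const _

theorem hasDerivAt_stdNormalCDF (x : ℝ) : HasDerivAt stdNormalCDF (stdNormalPDF x) x :=
  hasDerivAt_integral_Iic integrable_stdNormalPDF (by unfold stdNormalPDF; fun_prop) x

noncomputable def criticalRatio (x : ℝ) : ℝ := x * exp (x ^ 2 / 2) / (1 + x ^ 2) ^ 2

theorem continuous_criticalRatio : Continuous criticalRatio :=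
  Continuous.div (by fun_prop) (by fun_prop) fun x ↦ by positivity

theorem criticalRatio_zero : criticalRatio 0 = 0 := by simp [criticalRatio]

theorem self_div_32_le_criticalRatio {x : ℝ} (hx : 1 ≤ x) : x / 32 ≤ criticalRatio x := by
  have hexp : (x ^ 2 / 2) ^ 2 / 2 ≤ exp (x ^ 2 / 2) := by
    nlinarith [quadratic_le_exp_of_nonneg (x := x ^ 2 / 2) (by positivity)]
  have hden : (1 + x ^ 2) ^ 2 ≤ 4 * x ^ 4 := by nlinarith [one_le_pow₀ (n := 2) hx]
  rw [criticalRatio, le_div_iff₀ (by positivity)]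
  calc x / 32 * (1 + x ^ 2) ^ 2 ≤ x / 32 * (4 * x ^ 4) := by gcongr
    _ = x * ((x ^ 2 / 2) ^ 2 / 2) := by ring
    _ ≤ x * exp (x ^ 2 / 2) := by gcongr

theorem tendsto_criticalRatio_atTop : Tendsto criticalRatio atTop atTop :=
  tendsto_atTop_mono' _ ((eventually_ge_atTop 1).mono fun _ ↦ self_div_32_le_criticalRatio)
    (tendsto_id.atTop_div_const (by norm_num))

noncomputable def psiRight (x : ℝ) : ℝ := 1 / (1 + x ^ 2) - stdNormalCDF (-x)

theorem Psi_eq_psiRight_abs (x : ℝ) : Psi x = psiRight |x| := by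
  simp [Psi, psiRight, sq_abs]

theorem hasDerivAt_psiRight (x : ℝ) :
    HasDerivAt psiRight (2 * exp (-x ^ 2 / 2) * (1 / √(8 * π) - criticalRatio x)) x := by
  have hinv : HasDerivAt (fun y : ℝ ↦ 1 / (1 + y ^ 2)) (-(2 * x) / (1 + x ^ 2) ^ 2) x := by
    simpa [one_div] using ((hasDerivAt_pow 2 x).const_add 1).fun_inv (by positivity)
  have hcdf : HasDerivAt (fun y ↦ stdNormalCDF (-y)) (-stdNormalPDF x) x := by
    simpa [Function.comp_def, stdNormalPDF] using
      (hasDerivAt_stdNormalCDF (-x)).comp x (hasDerivAt_neg x)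
  have hsqrt : √(8 * π) = 2 * √(2 * π) := by
    rw [show 8 * π = 2 ^ 2 * (2 * π) by ring, sqrt_mul (by positivity), sqrt_sq (by norm_num)]
  have hderiv : 2 * exp (-x ^ 2 / 2) * (1 / √(8 * π) - criticalRatio x)
      = -(2 * x) / (1 + x ^ 2) ^ 2 - -stdNormalPDF x := by
    rw [criticalRatio, stdNormalPDF, hsqrt, neg_div, exp_neg]
    field_simp
    ring
  rw [hderiv]
  exact hinv.sub hcdf

section Unimodal

variable {a : ℝ}

theorem criticalRatio_lt_of_lt
    (huniq : ∀ y : ℝ, 0 < y → criticalRatio y = 1 / √(8 * π) → y = a) {y : ℝ} (hy0 : 0 ≤ y)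
    (hy : y < a) : criticalRatio y < 1 / √(8 * π) := by
  have hc : 0 < 1 / √(8 * π) := by positivity
  refine isPreconnected_Icc.lt_of_lt_of_notMem_image continuous_criticalRatio.continuousOn ?_
    (left_mem_Icc.2 hy0) (right_mem_Icc.2 hy0) (criticalRatio_zero.symm ▸ hc)
  rintro ⟨z, hz, hzc⟩
  have hz0 : 0 < z := hz.1.lt_of_ne <| by
    rintro rfl
    exact hc.ne (criticalRatio_zero ▸ hzc)
  exact hy.not_ge (huniq z hz0 hzc ▸ hz.2)

theorem lt_criticalRatio_of_lt (ha : 0 < a)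
    (huniq : ∀ y : ℝ, 0 < y → criticalRatio y = 1 / √(8 * π) → y = a) {y : ℝ} (hy : a < y) :
    1 / √(8 * π) < criticalRatio y := by
  obtain ⟨z, hzc, hyz⟩ :=
    ((tendsto_criticalRatio_atTop.eventually_gt_atTop _).and (eventually_ge_atTop y)).exists
  by_contra! hle
  have hlt : criticalRatio y < 1 / √(8 * π) :=
    hle.lt_of_ne fun hyc ↦ hy.ne' (huniq y (ha.trans hy) hyc)
  refine (isPreconnected_Icc.lt_of_lt_of_notMem_image continuous_criticalRatio.continuousOn ?_
    (left_mem_Icc.2 hyz) (right_mem_Icc.2 hyz) hlt).not_gt hzc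
  rintro ⟨w, hw, hwc⟩
  exact hy.not_ge (huniq w (ha.trans (hy.trans_le hw.1)) hwc ▸ hw.1)

theorem psiRight_lt_of_ne (ha : 0 < a)
    (huniq : ∀ y : ℝ, 0 < y → criticalRatio y = 1 / √(8 * π) → y = a) {y : ℝ} (hy : 0 ≤ y)
    (hne : y ≠ a) : psiRight y < psiRight a := by
  have hcont : Continuous psiRight :=
    Differentiable.continuous fun x ↦ (hasDerivAt_psiRight x).differentiableAt
  rcases hne.lt_or_gt with hlt | hgt
  · have hmono : StrictMonoOn psiRight (Icc 0 a) := by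
      refine strictMonoOn_of_deriv_pos (convex_Icc 0 a) hcont.continuousOn fun x hx ↦ ?_
      rw [interior_Icc] at hx
      rw [(hasDerivAt_psiRight x).deriv]
      exact mul_pos (by positivity) (sub_pos.2 (criticalRatio_lt_of_lt huniq hx.1.le hx.2))
    exact hmono ⟨hy, hlt.le⟩ ⟨ha.le, le_rfl⟩ hlt
  · have hanti : StrictAntiOn psiRight (Ici a) := by
      refine strictAntiOn_of_deriv_neg (convex_Ici a) hcont.continuousOn fun x hx ↦ ?_
      rw [interior_Ici] at hx
      rw [(hasDerivAt_psiRight x).deriv]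
      exact mul_neg_of_pos_of_neg (by positivity) (sub_neg.2 (lt_criticalRatio_of_lt ha huniq hx))
    exact hanti (mem_Ici.2 le_rfl) hgt.le hgt

end Unimodal

theorem Psi_max_points_general (xΦ : ℝ) (hpos : 0 < xΦ)
    (huniq : ∀ y : ℝ, 0 < y →
      y * Real.exp (y ^ 2 / 2) / (1 + y ^ 2) ^ 2 = 1 / Real.sqrt (8 * Real.pi) → y = xΦ) :
    ∀ x : ℝ, Psi x ≤ Psi xΦ ∧ (Psi x = Psi xΦ ↔ x = xΦ ∨ x = -xΦ) := by
  intro x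
  rw [Psi_eq_psiRight_abs, Psi_eq_psiRight_abs, abs_of_pos hpos, ← abs_eq hpos.le]
  rcases eq_or_ne |x| xΦ with hx | hx
  · simp [hx]
  · have hlt := psiRight_lt_of_ne hpos huniq (abs_nonneg x) hx
    exact ⟨hlt.le, by simp [hlt.ne, hx]⟩

theorem Psi_max_points (xΦ : ℝ) (hpos : 0 < xΦ)
    (hroot : xΦ * Real.exp (xΦ ^ 2 / 2) / (1 + xΦ ^ 2) ^ 2 = 1 / Real.sqrt (8 * Real.pi))
    (huniq : ∀ y : ℝ, 0 < y →
      y * Real.exp (y ^ 2 / 2) / (1 + y ^ 2) ^ 2 = 1 / Real.sqrt (8 * Real.pi) → y = xΦ) :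
    ∀ x : ℝ, Psi x ≤ Psi xΦ ∧ (Psi x = Psi xΦ ↔ x = xΦ ∨ x = -xΦ) :=
  Psi_max_points_general xΦ hpos huniq
end

section
/- The maximum value C_Φ = sup_{x∈ℝ} (1/(1+x²) − Φ(−|x|)) satisfies 0.5409 < C_Φ < 0.5410. -/
open Real MeasureTheory

/-!
For `a = |x|` write `Φ(-a) = 1/2 - (∫₀ᵃ e^{-t²/2} dt) / √(2π)`. For `a ≥ 1` the function is at
most `1/2`. On `[0, 1]` the Taylor bounds `1 - s ≤ e^{-s} ≤ 1 - s + s²/2 + 2s³/9` integrate to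
polynomial bounds on the integral, and the rational bounds `2.50658 < √(2π) < 2.50663` turn both
estimates into polynomial inequalities in `a`: the lower bound is an evaluation at `a = 0.21`, the
upper bound `0.54099` a degree-nine polynomial inequality on `[0, 1]`.
-/

open Set

lemma stdNormalCDF_nonneg (x : ℝ) : 0 ≤ stdNormalCDF x :=
  setIntegral_nonneg measurableSet_Iic fun _ _ => by positivity

lemma integrable_exp_neg_sq_div_two : Integrable fun t : ℝ => exp (-t ^ 2 / 2) := by
  simpa [div_eq_inv_mul, neg_div] using integrable_exp_neg_mul_sq (by norm_num : (0 : ℝ) < 1 / 2)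

lemma integral_Ioi_zero_exp_neg_sq_div_two :
    ∫ t in Ioi (0 : ℝ), exp (-t ^ 2 / 2) = √(2 * π) / 2 := by
  simpa [div_eq_inv_mul, neg_div, div_inv_eq_mul, mul_comm] using integral_gaussian_Ioi (1 / 2)

lemma stdNormalCDF_neg (a : ℝ) :
    stdNormalCDF (-a) = 1 / 2 - (∫ t in (0 : ℝ)..a, exp (-t ^ 2 / 2)) / √(2 * π) := by
  have htail : ∫ t in Iic (-a), exp (-t ^ 2 / 2) = ∫ t in Ioi a, exp (-t ^ 2 / 2) := by
    have h := integral_comp_neg_Ioi a fun t => exp (-t ^ 2 / 2)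
    simp only [even_two.neg_pow] at h
    exact h.symm
  have hsplit := intervalIntegral.integral_interval_add_Ioi
    integrable_exp_neg_sq_div_two.integrableOn integrable_exp_neg_sq_div_two.integrableOn
    (a := 0) (b := a)
  rw [integral_Ioi_zero_exp_neg_sq_div_two, ← eq_sub_iff_add_eq'] at hsplit
  rw [stdNormalCDF, integral_div, htail, hsplit, sub_div, div_div_cancel_left' (by positivity), one_div]

lemma exp_le_cubic_of_abs_le_one {x : ℝ} (hx : |x| ≤ 1) :
    exp x ≤ 1 + x + x ^ 2 / 2 + 2 * |x| ^ 3 / 9 := by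
  have h := (abs_le.1 (Real.exp_bound hx (n := 3) (by norm_num))).2
  norm_num [Finset.sum_range_succ, Nat.factorial] at h
  linarith

lemma exp_neg_sq_div_two_le {t : ℝ} (ht : t ^ 2 ≤ 2) :
    exp (-t ^ 2 / 2) ≤ 1 - t ^ 2 / 2 + t ^ 4 / 8 + t ^ 6 / 36 := by
  have habs : |-t ^ 2 / 2| = t ^ 2 / 2 := by rw [neg_div, abs_neg, abs_of_nonneg (by positivity)]
  have hle : |-t ^ 2 / 2| ≤ 1 := by rw [habs]; linarith
  have h := exp_le_cubic_of_abs_le_one hle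
  rw [habs] at h
  linarith [show (-t ^ 2 / 2) ^ 2 / 2 = t ^ 4 / 8 by ring,
    show 2 * (t ^ 2 / 2) ^ 3 / 9 = t ^ 6 / 36 by ring]

lemma integral_exp_neg_sq_div_two_ge {a : ℝ} (ha : 0 ≤ a) :
    a - a ^ 3 / 6 ≤ ∫ t in (0 : ℝ)..a, exp (-t ^ 2 / 2) := by
  have hpoly : ∫ t in (0 : ℝ)..a, (1 - t ^ 2 / 2) = a - a ^ 3 / 6 := by
    norm_num [integral_pow, div_div]
  rw [← hpoly]
  refine intervalIntegral.integral_mono_on ha ((by fun_prop : Continuous _).intervalIntegrable _ _)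
    ((by fun_prop : Continuous _).intervalIntegrable _ _) fun t _ => ?_
  linarith [add_one_le_exp (-t ^ 2 / 2)]

lemma integral_exp_neg_sq_div_two_le {a : ℝ} (ha : 0 ≤ a) (ha2 : a ^ 2 ≤ 2) :
    ∫ t in (0 : ℝ)..a, exp (-t ^ 2 / 2) ≤ a - a ^ 3 / 6 + a ^ 5 / 40 + a ^ 7 / 252 := by
  have hint : ∀ p : ℝ → ℝ, Continuous p → IntervalIntegrable p volume 0 a :=
    fun p hp => hp.intervalIntegrable _ _
  have hpoly : ∫ t in (0 : ℝ)..a, (1 - t ^ 2 / 2 + t ^ 4 / 8 + t ^ 6 / 36)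
      = a - a ^ 3 / 6 + a ^ 5 / 40 + a ^ 7 / 252 := by
    rw [intervalIntegral.integral_add (hint _ (by fun_prop)) (hint _ (by fun_prop)),
      intervalIntegral.integral_add (hint _ (by fun_prop)) (hint _ (by fun_prop))]
    norm_num [integral_pow, div_div]
  rw [← hpoly]
  refine intervalIntegral.integral_mono_on ha (hint _ (by fun_prop)) (hint _ (by fun_prop))
    fun t ht => exp_neg_sq_div_two_le ?_
  nlinarith [ht.1, ht.2]

lemma sqrt_two_pi_gt : 20000 / 7979 < √(2 * π) :=
  (lt_sqrt (by norm_num)).2 (by linarith [pi_gt_d6])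

lemma sqrt_two_pi_lt : √(2 * π) < 250663 / 100000 :=
  (sqrt_lt' (by norm_num)).2 (by linarith [pi_lt_d6])

lemma one_div_one_add_sq_add_le {x : ℝ} (h0 : 0 ≤ x) (h1 : x ≤ 1) :
    1 / (1 + x ^ 2) + 7979 / 20000 * (x - x ^ 3 / 6 + x ^ 5 / 40 + x ^ 7 / 252)
      ≤ 104099 / 100000 := by
  have h : 1 / (1 + x ^ 2) ≤
      104099 / 100000 - 7979 / 20000 * (x - x ^ 3 / 6 + x ^ 5 / 40 + x ^ 7 / 252) := by
    rw [div_le_iff₀ (by positivity)]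
    -- the inequality is nearly tight at the maximiser `x ≈ 0.21311`
    nlinarith [sq_nonneg (x - 21311 / 100000), pow_le_one₀ h0 h1 (n := 4),
      pow_le_one₀ h0 h1 (n := 5), pow_le_one₀ h0 h1 (n := 6), pow_le_one₀ h0 h1 (n := 7),
      pow_nonneg h0 2, pow_nonneg h0 3]
  linarith

lemma one_div_one_add_sq_sub_stdNormalCDF_le_of_le_one {a : ℝ} (h0 : 0 ≤ a) (h1 : a ≤ 1) :
    1 / (1 + a ^ 2) - stdNormalCDF (-a) ≤ 54099 / 100000 := by
  rw [stdNormalCDF_neg]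
  have hpoly := one_div_one_add_sq_add_le h0 h1
  set I := ∫ t in (0 : ℝ)..a, exp (-t ^ 2 / 2)
  set P := a - a ^ 3 / 6 + a ^ 5 / 40 + a ^ 7 / 252
  have hIP : I ≤ P := integral_exp_neg_sq_div_two_le h0 (by nlinarith)
  have hI : 0 ≤ I := intervalIntegral.integral_nonneg h0 fun t _ => (exp_pos _).le
  have hdiv : I / √(2 * π) ≤ 7979 / 20000 * P := by
    rw [div_le_iff₀ (by positivity)]
    linarith [mul_le_mul_of_nonneg_left sqrt_two_pi_gt.le (hI.trans hIP)]
  linarith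

lemma one_div_one_add_sq_sub_stdNormalCDF_le_half {a : ℝ} (h1 : 1 ≤ a) :
    1 / (1 + a ^ 2) - stdNormalCDF (-a) ≤ 1 / 2 := by
  have h : 1 / (1 + a ^ 2) ≤ 1 / 2 := one_div_le_one_div_of_le (by norm_num) (by nlinarith)
  linarith [stdNormalCDF_nonneg (-a)]

lemma one_div_one_add_sq_sub_stdNormalCDF_le (x : ℝ) :
    1 / (1 + x ^ 2) - stdNormalCDF (-|x|) ≤ 54099 / 100000 := by
  rw [← sq_abs x]
  rcases le_total |x| 1 with h | h
  · exact one_div_one_add_sq_sub_stdNormalCDF_le_of_le_one (abs_nonneg x) h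
  · linarith [one_div_one_add_sq_sub_stdNormalCDF_le_half h]

lemma lt_one_div_one_add_sq_sub_stdNormalCDF :
    0.5409 < 1 / (1 + (0.21 : ℝ) ^ 2) - stdNormalCDF (-0.21) := by
  have hI := integral_exp_neg_sq_div_two_ge (a := 0.21) (by norm_num)
  have hdiv : (0.21 - 0.21 ^ 3 / 6) / (250663 / 100000)
      ≤ (∫ t in (0 : ℝ)..0.21, exp (-t ^ 2 / 2)) / √(2 * π) :=
    div_le_div₀ ((by norm_num : (0 : ℝ) ≤ _).trans hI) hI (by positivity) sqrt_two_pi_lt.le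
  rw [stdNormalCDF_neg]
  norm_num at hdiv ⊢
  linarith

theorem C_Phi_bounds :
    0.5409 < (⨆ x : ℝ, (1 / (1 + x ^ 2) - stdNormalCDF (-|x|))) ∧
    (⨆ x : ℝ, (1 / (1 + x ^ 2) - stdNormalCDF (-|x|))) < 0.5410 := by
  have hbdd : BddAbove (range fun x : ℝ => 1 / (1 + x ^ 2) - stdNormalCDF (-|x|)) :=
    ⟨_, forall_mem_range.2 one_div_one_add_sq_sub_stdNormalCDF_le⟩
  refine ⟨?_, (ciSup_le one_div_one_add_sq_sub_stdNormalCDF_le).trans_lt (by norm_num)⟩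
  calc (0.5409 : ℝ) < 1 / (1 + 0.21 ^ 2) - stdNormalCDF (-|0.21|) := by
        rw [abs_of_pos (by norm_num)]
        exact lt_one_div_one_add_sq_sub_stdNormalCDF
    _ ≤ _ := le_ciSup hbdd _
end
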